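/- Let n ≥ 3 and suppose a_n ≥ 2 and a_{n+1} = a_{n+2} = 1. Then q_n − q_{n-1}, 2q_{n-1} + q_n, 2q_n, 2q_{n+1} are four successive elements of 𝔔(α). -/

import Mathlib

open Filter Real Set

/-- Iterates of the Gauss map starting from `α`: `x₀ = α`, `x_{n+1} = 1 / fract (xₙ)`. -/
noncomputable def gaussIter (α : ℝ) : ℕ → ℝ
  | 0 => α
  | n + 1 => (Int.fract (gaussIter α n))⁻¹

/-- Partial quotients of the continued fraction `α = [a₀; a₁, a₂, …]`. -/
noncomputable def cfA (α : ℝ) (n : ℕ) : ℤ := ⌊gaussIter α n⌋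

/-- Denominators of convergents, with shifted index: `cfQ α 0 = q₋₁ = 0`,
`cfQ α 1 = q₀ = 1`, and `cfQ α (n+1) = qₙ` where `qₙ = aₙ q_{n-1} + q_{n-2}`. -/
noncomputable def cfQ (α : ℝ) : ℕ → ℤ
  | 0 => 0
  | 1 => 1
  | n + 2 => cfA α (n + 1) * cfQ α (n + 1) + cfQ α n

/-- Numerators of convergents, with shifted index: `cfP α 0 = p₋₁ = 1`,
`cfP α 1 = p₀ = ⌊α⌋`, and `cfP α (n+1) = pₙ` where `pₙ = aₙ p_{n-1} + p_{n-2}`. -/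
noncomputable def cfP (α : ℝ) : ℕ → ℤ
  | 0 => 1
  | 1 => ⌊α⌋
  | n + 2 => cfA α (n + 1) * cfP α (n + 1) + cfP α n

/-- `qₙ`, the denominator of the `n`-th convergent of `α`. -/
noncomputable def cfDen (α : ℝ) (n : ℕ) : ℤ := cfQ α (n + 1)

/-- `pₙ`, the numerator of the `n`-th convergent of `α`. -/
noncomputable def cfNum (α : ℝ) (n : ℕ) : ℤ := cfP α (n + 1)

/-- `ξₙ = |qₙ α − pₙ|`. -/
noncomputable def cfXi (α : ℝ) (n : ℕ) : ℝ := |(cfDen α n : ℝ) * α - (cfNum α n : ℝ)|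

/-- `ψ_α(t) = min { ‖qα‖ : q ∈ ℤ, 1 ≤ q ≤ t }`. -/
noncomputable def psiFn (α t : ℝ) : ℝ :=
  sInf {x : ℝ | ∃ p q : ℤ, 1 ≤ q ∧ (q : ℝ) ≤ t ∧ x = |(q : ℝ) * α - (p : ℝ)|}

/-- `ψ_α^[2](t)`: the same minimum but over pairs `(p,q)` that are not `(pₙ,qₙ)` for any `n ≥ 0`. -/
noncomputable def psi2Fn (α t : ℝ) : ℝ :=
  sInf {x : ℝ | ∃ p q : ℤ, 1 ≤ q ∧ (q : ℝ) ≤ t ∧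
    (∀ n : ℕ, ¬(p = cfNum α n ∧ q = cfDen α n)) ∧ x = |(q : ℝ) * α - (p : ℝ)|}

/-- `ψ_α^[2]*(t)`: the same minimum but over pairs `(p,q)` with `p/q ≠ pₙ/qₙ` for all `n ≥ 0`. -/
noncomputable def psi2sFn (α t : ℝ) : ℝ :=
  sInf {x : ℝ | ∃ p q : ℤ, 1 ≤ q ∧ (q : ℝ) ≤ t ∧
    (∀ n : ℕ, (p : ℝ) / (q : ℝ) ≠ (cfNum α n : ℝ) / (cfDen α n : ℝ)) ∧
    x = |(q : ℝ) * α - (p : ℝ)|}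

/-- `λ(α) = liminf_{t→∞} t · ψ_α(t)`. -/
noncomputable def lamOf (α : ℝ) : ℝ := Filter.liminf (fun t : ℝ => t * psiFn α t) Filter.atTop

/-- `𝔨(α) = liminf_{t→∞} t · ψ_α^[2](t)`. -/
noncomputable def kOf (α : ℝ) : ℝ := Filter.liminf (fun t : ℝ => t * psi2Fn α t) Filter.atTop

/-- `𝔨*(α) = liminf_{t→∞} t · ψ_α^[2]*(t)`. -/
noncomputable def ksOf (α : ℝ) : ℝ := Filter.liminf (fun t : ℝ => t * psi2sFn α t) Filter.atTop

/-- `α` and `β` are equivalent: `β = (aα+b)/(cα+d)` with `a,b,c,d ∈ ℤ`, `|ad − bc| = 1`. -/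
def CFEquiv (α β : ℝ) : Prop :=
  ∃ a b c d : ℤ, |a * d - b * c| = 1 ∧ β = ((a : ℝ) * α + (b : ℝ)) / ((c : ℝ) * α + (d : ℝ))

/-- The spectrum `𝕃₂ = {𝔨(α) : α irrational}`. -/
def L2 : Set ℝ := {x : ℝ | ∃ α : ℝ, Irrational α ∧ kOf α = x}

/-- The spectrum `𝕃₂* = {𝔨*(α) : α irrational}`. -/
def L2s : Set ℝ := {x : ℝ | ∃ α : ℝ, Irrational α ∧ ksOf α = x}

/-- `𝔔(α)`: the set of positive integers at which `ψ_α^[2]` is discontinuous. -/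
def QSet (α : ℝ) : Set ℤ := {m : ℤ | 0 < m ∧ ¬ ContinuousAt (psi2Fn α) (m : ℝ)}

/-- `𝔛(α)`: the set of positive integers at which `ψ_α^[2]*` is discontinuous. -/
def XSet (α : ℝ) : Set ℤ := {m : ℤ | 0 < m ∧ ¬ ContinuousAt (psi2sFn α) (m : ℝ)}

/-- The members of the list `l` are successive elements of `S`: they belong to `S`,
are listed in increasing order, and no element of `S` lies strictly between
consecutive listed ones. -/
def SuccessiveIn (S : Set ℤ) (l : List ℤ) : Prop :=
  (∀ x ∈ l, x ∈ S) ∧ l.Chain' (fun x y => x < y ∧ ∀ z ∈ S, ¬(x < z ∧ z < y))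

/-- `κ¹ₙ = (q_{n-2} + q_{n-1})(ξ_{n-2} − ξ_{n-1})`. -/
noncomputable def kap1 (α : ℝ) (n : ℕ) : ℝ :=
  ((cfDen α (n - 2) + cfDen α (n - 1) : ℤ) : ℝ) * (cfXi α (n - 2) - cfXi α (n - 1))

/-- `κ²ₙ = (qₙ − q_{n-1})(ξ_{n-1} + ξₙ)`. -/
noncomputable def kap2 (α : ℝ) (n : ℕ) : ℝ :=
  ((cfDen α n - cfDen α (n - 1) : ℤ) : ℝ) * (cfXi α (n - 1) + cfXi α n)

/-- `κ³ₙ = (2q_{n-2} + q_{n-1})(2ξ_{n-2} − ξ_{n-1})`. -/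
noncomputable def kap3 (α : ℝ) (n : ℕ) : ℝ :=
  ((2 * cfDen α (n - 2) + cfDen α (n - 1) : ℤ) : ℝ) * (2 * cfXi α (n - 2) - cfXi α (n - 1))

/-- `κ⁴ₙ = 4 q_{n-1} ξ_{n-1}`. -/
noncomputable def kap4 (α : ℝ) (n : ℕ) : ℝ :=
  ((4 * cfDen α (n - 1) : ℤ) : ℝ) * cfXi α (n - 1)

/-! Write `b = q_{n-1}`, `c = q_n`, `x = ξ_n`, `z = ξ_{n+1}`. The hypotheses give
`q_{n+1} = c + b`, `q_{n+2} = 2c + b`, `ξ_{n-1} = x + z` and `z < x < 2z`. Since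
`(p_n, q_n), (p_{n-1}, q_{n-1})` is a basis of `ℤ²`, every pair is
`u (p_n, q_n) + v (p_{n-1}, q_{n-1})`, with error `±(u x - v (x + z))`. Among the pairs with
`1 ≤ q ≤ 2c + 2b`, this error is below `2x + 2z` only for the four convergents and for
`(u, v) = (1, -1), (1, 2), (2, 0), (2, 2)`, whose denominators `c - b < c + 2b < 2c < 2c + 2b`
carry the errors `2x + z > x + 2z > 2x > 2z`. So `ψ_α^[2]` is a step function on
`[c - b - 1, 2c + 2b]` that drops exactly at these four denominators. -/
section ContinuedFraction

variable {α : ℝ}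

lemma irrational_gaussIter (hα : Irrational α) : ∀ k, Irrational (gaussIter α k)
  | 0 => hα
  | k + 1 => by
    rw [gaussIter, ← Int.self_sub_floor]
    exact ((irrational_gaussIter hα k).sub_intCast _).inv

lemma fract_gaussIter_pos (hα : Irrational α) (k : ℕ) : 0 < Int.fract (gaussIter α k) :=
  Int.fract_pos.2 ((irrational_gaussIter hα k).ne_int _)

lemma one_le_cfA_succ (hα : Irrational α) (k : ℕ) : 1 ≤ cfA α (k + 1) := by
  have h : 1 < gaussIter α (k + 1) :=
    one_lt_inv_iff₀.2 ⟨fract_gaussIter_pos hα k, Int.fract_lt_one _⟩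
  exact Int.le_floor.2 (by exact_mod_cast h.le)

lemma cfDen_add_two (α : ℝ) (k : ℕ) :
    cfDen α (k + 2) = cfA α (k + 2) * cfDen α (k + 1) + cfDen α k := rfl

lemma cfNum_add_two (α : ℝ) (k : ℕ) :
    cfNum α (k + 2) = cfA α (k + 2) * cfNum α (k + 1) + cfNum α k := rfl

lemma one_le_cfDen (hα : Irrational α) (k : ℕ) : 1 ≤ cfDen α k := by
  suffices ∀ k, 0 ≤ cfQ α k ∧ 1 ≤ cfQ α (k + 1) from (this k).2
  intro k
  induction k with
  | zero => exact ⟨le_rfl, le_rfl⟩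
  | succ k ih =>
    refine ⟨by linarith [ih.2], ?_⟩
    show 1 ≤ cfA α (k + 1) * cfQ α (k + 1) + cfQ α k
    nlinarith [one_le_cfA_succ hα k]

lemma cfDen_mono (hα : Irrational α) : Monotone (cfDen α) := by
  refine monotone_nat_of_le_succ fun k => ?_
  show cfQ α (k + 1) ≤ cfA α (k + 1) * cfQ α (k + 1) + cfQ α k
  have hq : 0 ≤ cfQ α k := by
    cases k with
    | zero => exact le_rfl
    | succ k => exact zero_le_one.trans (one_le_cfDen hα k)
  have hq' : 1 ≤ cfQ α (k + 1) := one_le_cfDen hα k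
  nlinarith [one_le_cfA_succ hα k]

lemma cfDen_add_le_cfDen_add_two (hα : Irrational α) (k : ℕ) :
    cfDen α (k + 1) + cfDen α k ≤ cfDen α (k + 2) := by
  rw [cfDen_add_two]
  nlinarith [one_le_cfA_succ hα (k + 1), one_le_cfDen hα (k + 1)]

lemma cfNum_mul_cfDen_sub (α : ℝ) (m : ℕ) :
    cfNum α (m + 1) * cfDen α m - cfNum α m * cfDen α (m + 1) = (-1) ^ m := by
  induction m with
  | zero => simp [cfNum, cfDen, cfP, cfQ]; ring
  | succ m ih =>
    rw [cfNum_add_two, cfDen_add_two, pow_succ]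
    linear_combination -ih

/-- In the shifted indexing of `cfP`, `cfQ` this is `ξ_{k-1}`, including `ξ_{-1} = 1`; the sign
makes it positive. -/
noncomputable def cfErr (α : ℝ) (k : ℕ) : ℝ := (-1) ^ (k + 1) * ((cfQ α k : ℝ) * α - cfP α k)

lemma cfErr_eq_add (α : ℝ) (k : ℕ) :
    cfErr α k = cfA α (k + 1) * cfErr α (k + 1) + cfErr α (k + 2) := by
  simp only [cfErr, cfQ, cfP]
  push_cast
  ring

lemma cfErr_succ (hα : Irrational α) :
    ∀ k, cfErr α (k + 1) = Int.fract (gaussIter α k) * cfErr α k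
  | 0 => by simp [cfErr, cfQ, cfP, gaussIter, ← Int.self_sub_floor]
  | k + 1 => by
    have hf := (fract_gaussIter_pos hα k).ne'
    have hfract : Int.fract (gaussIter α (k + 1)) =
        (Int.fract (gaussIter α k))⁻¹ - cfA α (k + 1) :=
      (Int.self_sub_floor _).symm
    have ih := cfErr_succ hα k
    rw [hfract, ih, sub_mul, inv_mul_cancel_left₀ hf]
    linear_combination -cfErr_eq_add α k - cfA α (k + 1) * ih

lemma cfErr_pos (hα : Irrational α) : ∀ k, 0 < cfErr α k
  | 0 => by simp [cfErr, cfQ, cfP]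
  | k + 1 => by
    rw [cfErr_succ hα]
    exact mul_pos (fract_gaussIter_pos hα k) (cfErr_pos hα k)

lemma cfErr_strictAnti (hα : Irrational α) : StrictAnti (cfErr α) :=
  strictAnti_nat_of_succ_lt fun k => by
    rw [cfErr_succ hα]
    exact mul_lt_of_lt_one_left (cfErr_pos hα k) (Int.fract_lt_one _)

lemma cfDen_mul_sub_cfNum_eq_cfErr (α : ℝ) (m : ℕ) :
    (cfDen α m : ℝ) * α - cfNum α m = (-1) ^ m * cfErr α (m + 1) := by
  rw [cfErr, ← mul_assoc, ← pow_add, show m + (m + 1 + 1) = 2 * (m + 1) by ring, pow_mul,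
    neg_one_sq, one_pow, one_mul]
  rfl

lemma cfXi_eq_cfErr (hα : Irrational α) (m : ℕ) : cfXi α m = cfErr α (m + 1) := by
  rw [cfXi, cfDen_mul_sub_cfNum_eq_cfErr, abs_mul, abs_neg_one_pow, one_mul,
    abs_of_pos (cfErr_pos hα _)]

lemma cfDen_mul_sub_cfNum (hα : Irrational α) (m : ℕ) :
    (cfDen α m : ℝ) * α - cfNum α m = (-1) ^ m * cfXi α m := by
  rw [cfDen_mul_sub_cfNum_eq_cfErr, cfXi_eq_cfErr hα]

lemma cfXi_pos (hα : Irrational α) (m : ℕ) : 0 < cfXi α m := by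
  rw [cfXi_eq_cfErr hα]
  exact cfErr_pos hα _

lemma cfXi_lt_one (hα : Irrational α) (m : ℕ) : cfXi α m < 1 := by
  rw [cfXi_eq_cfErr hα]
  simpa [cfErr, cfQ, cfP] using cfErr_strictAnti hα (Nat.succ_pos m)

lemma cfXi_succ_lt (hα : Irrational α) (m : ℕ) : cfXi α (m + 1) < cfXi α m := by
  rw [cfXi_eq_cfErr hα, cfXi_eq_cfErr hα]
  exact cfErr_strictAnti hα (Nat.lt_succ_self _)

lemma cfXi_eq_add (hα : Irrational α) (m : ℕ) :
    cfXi α m = cfA α (m + 2) * cfXi α (m + 1) + cfXi α (m + 2) := by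
  simp only [cfXi_eq_cfErr hα]
  exact cfErr_eq_add α (m + 1)

lemma abs_lincomb_cfDen_mul_sub (hα : Irrational α) (m : ℕ) (u v : ℤ) :
    |((u * cfDen α (m + 1) + v * cfDen α m : ℤ) : ℝ) * α -
        ((u * cfNum α (m + 1) + v * cfNum α m : ℤ) : ℝ)| =
      |u * cfXi α (m + 1) - v * cfXi α m| := by
  have h : ((u * cfDen α (m + 1) + v * cfDen α m : ℤ) : ℝ) * α -
      ((u * cfNum α (m + 1) + v * cfNum α m : ℤ) : ℝ) =
      (-1) ^ (m + 1) * (u * cfXi α (m + 1) - v * cfXi α m) := by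
    push_cast
    linear_combination u * cfDen_mul_sub_cfNum hα (m + 1) + v * cfDen_mul_sub_cfNum hα m
  rw [h, abs_mul, abs_neg_one_pow, one_mul]

end ContinuedFraction

lemma exists_eq_mul_add_mul_of_det {a b c d : ℤ} (h : (a * d - b * c) ^ 2 = 1) (p q : ℤ) :
    ∃ u v : ℤ, p = u * a + v * b ∧ q = u * c + v * d :=
  ⟨(a * d - b * c) * (d * p - b * q), (a * d - b * c) * (a * q - c * p),
    by linear_combination -p * h, by linear_combination -q * h⟩

lemma exists_eq_lincomb_cfNum_cfDen (α : ℝ) (m : ℕ) (p q : ℤ) :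
    ∃ u v : ℤ, p = u * cfNum α (m + 1) + v * cfNum α m ∧
      q = u * cfDen α (m + 1) + v * cfDen α m := by
  refine exists_eq_mul_add_mul_of_det ?_ p q
  rw [cfNum_mul_cfDen_sub, ← pow_mul, pow_mul', neg_one_sq, one_pow]

lemma mem_of_abs_mul_sub_lt {b c u v : ℤ} {x z : ℝ} (hb : 1 ≤ b) (hc : 2 * b + 1 ≤ c)
    (hz : 0 < z) (hzx : z < x) (hxz : x < 2 * z)
    (hq : 1 ≤ u * c + v * b) (hq' : u * c + v * b ≤ 2 * c + 2 * b)
    (hlt : |u * x - v * (x + z)| < 2 * x + 2 * z) :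
    (u, v) ∈ ({(0, 1), (1, 0), (1, 1), (2, 1), (1, -1), (1, 2), (2, 0), (2, 2)} :
      Finset (ℤ × ℤ)) := by
  obtain ⟨hlo, hhi⟩ := abs_lt.1 hlt
  have hu₀ : 0 ≤ u := by
    by_contra! hu
    have hv : 3 ≤ v := by nlinarith
    have hu' : (u : ℝ) ≤ -1 := by exact_mod_cast (by omega : u ≤ -1)
    have hv' : (3 : ℝ) ≤ v := by exact_mod_cast hv
    nlinarith
  have hu₂ : u ≤ 2 := by
    by_contra! hu
    have hv : v ≤ -1 := by nlinarith
    have hu' : (3 : ℝ) ≤ u := by exact_mod_cast hu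
    have hv' : (v : ℝ) ≤ -1 := by exact_mod_cast hv
    nlinarith
  have hv₁ : -1 ≤ v := by
    by_contra! hv
    have hu' : (0 : ℝ) ≤ u := by exact_mod_cast hu₀
    have hv' : (v : ℝ) ≤ -2 := by exact_mod_cast (by omega : v ≤ -2)
    nlinarith
  have hv₂ : v ≤ 2 := by
    by_contra! hv
    have hu : u ≤ 1 := by nlinarith
    have hu' : (u : ℝ) ≤ 1 := by exact_mod_cast hu
    have hv' : (3 : ℝ) ≤ v := by exact_mod_cast hv
    nlinarith
  interval_cases u <;> interval_cases v <;> first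
    | decide
    | omega
    | (norm_num at hlo hhi; linarith)

lemma not_continuousAt_of_le_of_lt {f : ℝ → ℝ} {a b v : ℝ} (hab : a < b)
    (hf : ∀ t ∈ Ioo a b, v ≤ f t) (hb : f b < v) : ¬ ContinuousAt f b := fun h =>
  hb.not_ge <| ge_of_tendsto (h.tendsto.mono_left nhdsWithin_le_nhds)
    (eventually_of_mem (Ioo_mem_nhdsLT hab) hf)

lemma continuousAt_of_eq_on_Ioo {f : ℝ → ℝ} {a b v w : ℝ} (hf : ∀ t ∈ Ioo a b, f t = v)
    (hw : w ∈ Ioo a b) : ContinuousAt f w :=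
  continuousAt_const.congr_of_eventuallyEq (eventually_of_mem (Ioo_mem_nhds hw.1 hw.2) hf)

lemma successiveIn_of_steps {f : ℝ → ℝ} {m₁ m₂ m₃ m₄ : ℤ} {v₀ v₁ v₂ v₃ v₄ : ℝ}
    (hm₁ : 0 < m₁) (h₁₂ : m₁ < m₂) (h₂₃ : m₂ < m₃) (h₃₄ : m₃ < m₄)
    (hv₁ : v₁ < v₀) (hv₂ : v₂ < v₁) (hv₃ : v₃ < v₂) (hv₄ : v₄ < v₃)
    (hf₀ : ∀ t ∈ Ioo ((m₁ : ℝ) - 1) m₁, v₀ ≤ f t)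
    (hf₁ : ∀ t ∈ Ico (m₁ : ℝ) m₂, f t = v₁) (hf₂ : ∀ t ∈ Ico (m₂ : ℝ) m₃, f t = v₂)
    (hf₃ : ∀ t ∈ Ico (m₃ : ℝ) m₄, f t = v₃) (hf₄ : f m₄ = v₄) :
    SuccessiveIn {m : ℤ | 0 < m ∧ ¬ ContinuousAt f m} [m₁, m₂, m₃, m₄] := by
  have jump {a b : ℤ} {v w : ℝ} (hab : a < b) (hf : ∀ t ∈ Ico (a : ℝ) b, f t = v)
      (hb : f b = w) (hwv : w < v) : ¬ ContinuousAt f b :=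
    not_continuousAt_of_le_of_lt (by exact_mod_cast hab)
      (fun t ht => (hf t (Ioo_subset_Ico_self ht)).ge) (hb.trans_lt hwv)
  have flat {a b : ℤ} {v : ℝ} (hf : ∀ t ∈ Ico (a : ℝ) b, f t = v) (w : ℤ)
      (hw : w ∈ {m : ℤ | 0 < m ∧ ¬ ContinuousAt f m}) : ¬(a < w ∧ w < b) := fun ⟨h₁, h₂⟩ =>
    hw.2 <| continuousAt_of_eq_on_Ioo (fun t ht => hf t (Ioo_subset_Ico_self ht))
      ⟨by exact_mod_cast h₁, by exact_mod_cast h₂⟩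
  have hf₁' : f m₁ = v₁ := hf₁ _ ⟨le_rfl, by exact_mod_cast h₁₂⟩
  have hf₂' : f m₂ = v₂ := hf₂ _ ⟨le_rfl, by exact_mod_cast h₂₃⟩
  have hf₃' : f m₃ = v₃ := hf₃ _ ⟨le_rfl, by exact_mod_cast h₃₄⟩
  refine ⟨?_, ?_⟩
  · simp only [List.mem_cons, List.not_mem_nil, or_false]
    rintro w (rfl | rfl | rfl | rfl)
    · exact ⟨hm₁, not_continuousAt_of_le_of_lt (sub_one_lt _) hf₀ (hf₁'.trans_lt hv₁)⟩
    · exact ⟨by omega, jump h₁₂ hf₁ hf₂' hv₂⟩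
    · exact ⟨by omega, jump h₂₃ hf₂ hf₃' hv₃⟩
    · exact ⟨by omega, jump h₃₄ hf₃ hf₄ hv₄⟩
  · exact List.isChain_cons_cons.2 ⟨⟨h₁₂, flat hf₁⟩,
      List.isChain_cons_cons.2 ⟨⟨h₂₃, flat hf₂⟩, List.isChain_pair.2 ⟨h₃₄, flat hf₃⟩⟩⟩

def NotConvergent (α : ℝ) (p q : ℤ) : Prop := ∀ n : ℕ, ¬(p = cfNum α n ∧ q = cfDen α n)

def psi2Set (α t : ℝ) : Set ℝ :=
  {x | ∃ p q : ℤ, 1 ≤ q ∧ (q : ℝ) ≤ t ∧ NotConvergent α p q ∧ x = |(q : ℝ) * α - p|}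

section Psi2

variable {α : ℝ}

lemma psi2Fn_eq_sInf (α t : ℝ) : psi2Fn α t = sInf (psi2Set α t) := rfl

lemma notConvergent_of_one_le_abs (hα : Irrational α) {p q : ℤ}
    (h : 1 ≤ |(q : ℝ) * α - p|) : NotConvergent α p q := by
  rintro n ⟨rfl, rfl⟩
  exact h.not_gt (cfXi_lt_one hα n)

lemma notConvergent_of_lt_of_lt (hα : Irrational α) {p q : ℤ} {k : ℕ}
    (h₁ : cfDen α k < q) (h₂ : q < cfDen α (k + 1)) : NotConvergent α p q := by
  rintro n ⟨-, rfl⟩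
  rcases le_or_gt n k with h | h
  · exact h₁.not_ge (cfDen_mono hα h)
  · exact h₂.not_ge (cfDen_mono hα h)

lemma psi2Set_nonempty (hα : Irrational α) {t : ℝ} (ht : 1 ≤ t) : (psi2Set α t).Nonempty :=
  have h : 1 ≤ |((1 : ℤ) : ℝ) * α - ((⌊α⌋ - 1 : ℤ) : ℝ)| :=
    le_abs.2 (Or.inl (by push_cast; linarith [Int.floor_le α]))
  ⟨_, ⌊α⌋ - 1, 1, le_rfl, by exact_mod_cast ht, notConvergent_of_one_le_abs hα h, rfl⟩

lemma abs_lincomb_mem_psi2Set (hα : Irrational α) (m k : ℕ) (u v : ℤ) {t : ℝ}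
    (h₁ : cfDen α k < u * cfDen α (m + 1) + v * cfDen α m)
    (h₂ : u * cfDen α (m + 1) + v * cfDen α m < cfDen α (k + 1))
    (ht : ((u * cfDen α (m + 1) + v * cfDen α m : ℤ) : ℝ) ≤ t) :
    |u * cfXi α (m + 1) - v * cfXi α m| ∈ psi2Set α t :=
  ⟨_, _, (one_le_cfDen hα k).trans h₁.le, ht, notConvergent_of_lt_of_lt hα h₁ h₂,
    (abs_lincomb_cfDen_mul_sub hα m u v).symm⟩

end Psi2

section PartialQuotientsTwoOneOne

/- Here `m = n - 1`: `b = q_m`, `c = q_{m+1}`, `x = ξ_{m+1}`, `z = ξ_{m+2}`. -/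

variable {α : ℝ} {m : ℕ}

lemma two_mul_add_one_le_cfDen (hα : Irrational α) (hm : 1 ≤ m) (ha : 2 ≤ cfA α (m + 1)) :
    2 * cfDen α m + 1 ≤ cfDen α (m + 1) := by
  obtain ⟨k, rfl⟩ : ∃ k, m = k + 1 := ⟨m - 1, by omega⟩
  rw [cfDen_add_two]
  nlinarith [one_le_cfDen hα k, one_le_cfDen hα (k + 1)]

lemma cfDen_add_two_of_cfA_eq_one (h : cfA α (m + 2) = 1) :
    cfDen α (m + 2) = cfDen α (m + 1) + cfDen α m := by
  rw [cfDen_add_two, h, one_mul]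

lemma cfNum_add_two_of_cfA_eq_one (h : cfA α (m + 2) = 1) :
    cfNum α (m + 2) = cfNum α (m + 1) + cfNum α m := by
  rw [cfNum_add_two, h, one_mul]

lemma cfXi_eq_add_of_cfA_eq_one (hα : Irrational α) (h : cfA α (m + 2) = 1) :
    cfXi α m = cfXi α (m + 1) + cfXi α (m + 2) := by
  rw [cfXi_eq_add hα, h, Int.cast_one, one_mul]

lemma cfXi_lt_two_mul_of_cfA_eq_one (hα : Irrational α) (h : cfA α (m + 2) = 1) :
    cfXi α m < 2 * cfXi α (m + 1) := by
  linarith [cfXi_eq_add_of_cfA_eq_one hα h, cfXi_succ_lt hα (m + 1)]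

lemma mem_psi2Set_cases (hα : Irrational α) (hm : 1 ≤ m) (ha : 2 ≤ cfA α (m + 1))
    (ha' : cfA α (m + 2) = 1) (ha'' : cfA α (m + 3) = 1) {t s : ℝ}
    (ht : t ≤ 2 * cfDen α (m + 2)) (hs : s ∈ psi2Set α t) :
    2 * cfXi α (m + 1) + 2 * cfXi α (m + 2) ≤ s ∨
    ((cfDen α (m + 1) : ℝ) - cfDen α m ≤ t ∧ s = 2 * cfXi α (m + 1) + cfXi α (m + 2)) ∨
    (2 * (cfDen α m : ℝ) + cfDen α (m + 1) ≤ t ∧ s = cfXi α (m + 1) + 2 * cfXi α (m + 2)) ∨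
    (2 * (cfDen α (m + 1) : ℝ) ≤ t ∧ s = 2 * cfXi α (m + 1)) ∨
    (2 * (cfDen α (m + 2) : ℝ) ≤ t ∧ s = 2 * cfXi α (m + 2)) := by
  obtain ⟨p, q, hq, hqt, hpq, rfl⟩ := hs
  have hb := one_le_cfDen hα m
  have hc := two_mul_add_one_le_cfDen hα hm ha
  have hd := cfDen_add_two_of_cfA_eq_one ha'
  have hz := cfXi_pos hα (m + 2)
  have hzx : cfXi α (m + 2) < cfXi α (m + 1) := cfXi_succ_lt hα (m + 1)
  have hxz : cfXi α (m + 1) < 2 * cfXi α (m + 2) := cfXi_lt_two_mul_of_cfA_eq_one hα ha''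
  have hq' : q ≤ 2 * cfDen α (m + 1) + 2 * cfDen α m := by
    have : (q : ℝ) ≤ 2 * cfDen α (m + 1) + 2 * cfDen α m := by
      push_cast [hd] at ht
      linarith
    exact_mod_cast this
  obtain ⟨u, v, rfl, rfl⟩ := exists_eq_lincomb_cfNum_cfDen α m p q
  rw [abs_lincomb_cfDen_mul_sub hα, cfXi_eq_add_of_cfA_eq_one hα ha']
  refine (lt_or_ge _ _).elim (fun hlt => ?_) Or.inl
  have hmem := mem_of_abs_mul_sub_lt hb hc hz hzx hxz hq hq' hlt
  simp only [Finset.mem_insert, Finset.mem_singleton, Prod.mk.injEq] at hmem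
  rcases hmem with ⟨rfl, rfl⟩ | ⟨rfl, rfl⟩ | ⟨rfl, rfl⟩ | ⟨rfl, rfl⟩ | ⟨rfl, rfl⟩ | ⟨rfl, rfl⟩ |
    ⟨rfl, rfl⟩ | ⟨rfl, rfl⟩
  · exact absurd ⟨by ring, by ring⟩ (hpq m)
  · exact absurd ⟨by ring, by ring⟩ (hpq (m + 1))
  · exact absurd ⟨by rw [cfNum_add_two_of_cfA_eq_one ha']; ring, by rw [hd]; ring⟩ (hpq (m + 2))
  · refine absurd ⟨?_, ?_⟩ (hpq (m + 3))
    · rw [cfNum_add_two_of_cfA_eq_one ha'', cfNum_add_two_of_cfA_eq_one ha']; ring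
    · rw [cfDen_add_two_of_cfA_eq_one ha'', hd]; ring
  all_goals push_cast at hqt ⊢
  · refine Or.inr (Or.inl ⟨by linarith, ?_⟩)
    rw [abs_of_pos (by linarith)]
    ring
  · refine Or.inr (Or.inr (Or.inl ⟨by linarith, ?_⟩))
    rw [abs_of_neg (by linarith)]
    ring
  · refine Or.inr (Or.inr (Or.inr (Or.inl ⟨by linarith, ?_⟩)))
    rw [abs_of_pos (by linarith)]
    ring
  · refine Or.inr (Or.inr (Or.inr (Or.inr ⟨by push_cast [hd]; linarith, ?_⟩)))
    rw [abs_of_neg (by linarith)]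
    ring

lemma special_mem_psi2Set (hα : Irrational α) (hm : 1 ≤ m) (ha : 2 ≤ cfA α (m + 1))
    (ha' : cfA α (m + 2) = 1) (ha'' : cfA α (m + 3) = 1) {t : ℝ} :
    ((cfDen α (m + 1) : ℝ) - cfDen α m ≤ t →
      2 * cfXi α (m + 1) + cfXi α (m + 2) ∈ psi2Set α t) ∧
    (2 * (cfDen α m : ℝ) + cfDen α (m + 1) ≤ t →
      cfXi α (m + 1) + 2 * cfXi α (m + 2) ∈ psi2Set α t) ∧
    (2 * (cfDen α (m + 1) : ℝ) ≤ t → 2 * cfXi α (m + 1) ∈ psi2Set α t) ∧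
    (2 * (cfDen α (m + 2) : ℝ) ≤ t → 2 * cfXi α (m + 2) ∈ psi2Set α t) := by
  have hb := one_le_cfDen hα m
  have hc := two_mul_add_one_le_cfDen hα hm ha
  have hd := cfDen_add_two_of_cfA_eq_one ha'
  have hd' : cfDen α (m + 3) = cfDen α (m + 2) + cfDen α (m + 1) :=
    cfDen_add_two_of_cfA_eq_one ha''
  have hd'' : cfDen α (m + 3) + cfDen α (m + 2) ≤ cfDen α (m + 4) :=
    cfDen_add_le_cfDen_add_two hα (m + 2)
  have hx := cfXi_pos hα (m + 1)
  have hz := cfXi_pos hα (m + 2)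
  have hy := cfXi_eq_add_of_cfA_eq_one hα ha'
  refine ⟨fun ht => ?_, fun ht => ?_, fun ht => ?_, fun ht => ?_⟩
  · convert abs_lincomb_mem_psi2Set hα m m 1 (-1) (t := t) (by omega) (by omega)
      (by push_cast; linarith) using 1
    rw [hy, abs_of_pos (by push_cast; linarith)]
    push_cast; ring
  · convert abs_lincomb_mem_psi2Set hα m (m + 2) 1 2 (t := t) (by omega)
      (by show _ < cfDen α (m + 3); omega) (by push_cast; linarith) using 1
    rw [hy, abs_of_neg (by push_cast; linarith)]
    push_cast; ring
  · convert abs_lincomb_mem_psi2Set hα m (m + 2) 2 0 (t := t) (by omega)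
      (by show _ < cfDen α (m + 3); omega) (by push_cast; linarith) using 1
    rw [abs_of_pos (by push_cast; linarith)]
    push_cast; ring
  · convert abs_lincomb_mem_psi2Set hα m (m + 3) 2 2 (t := t) (by omega)
      (by show _ < cfDen α (m + 4); omega)
      (by push_cast [hd] at ht ⊢; linarith) using 1
    rw [hy, abs_of_neg (by push_cast; linarith)]
    push_cast; ring

lemma psi2Fn_steps (hα : Irrational α) (hm : 1 ≤ m) (ha : 2 ≤ cfA α (m + 1))
    (ha' : cfA α (m + 2) = 1) (ha'' : cfA α (m + 3) = 1) :
    (∀ t ∈ Ioo (((cfDen α (m + 1) - cfDen α m : ℤ) : ℝ) - 1)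
        ((cfDen α (m + 1) - cfDen α m : ℤ) : ℝ),
      2 * cfXi α (m + 1) + 2 * cfXi α (m + 2) ≤ psi2Fn α t) ∧
    (∀ t ∈ Ico ((cfDen α (m + 1) - cfDen α m : ℤ) : ℝ)
        ((2 * cfDen α m + cfDen α (m + 1) : ℤ) : ℝ),
      psi2Fn α t = 2 * cfXi α (m + 1) + cfXi α (m + 2)) ∧
    (∀ t ∈ Ico ((2 * cfDen α m + cfDen α (m + 1) : ℤ) : ℝ) ((2 * cfDen α (m + 1) : ℤ) : ℝ),
      psi2Fn α t = cfXi α (m + 1) + 2 * cfXi α (m + 2)) ∧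
    (∀ t ∈ Ico ((2 * cfDen α (m + 1) : ℤ) : ℝ) ((2 * cfDen α (m + 2) : ℤ) : ℝ),
      psi2Fn α t = 2 * cfXi α (m + 1)) ∧
    psi2Fn α ((2 * cfDen α (m + 2) : ℤ) : ℝ) = 2 * cfXi α (m + 2) := by
  have hb : (1 : ℝ) ≤ cfDen α m := by exact_mod_cast one_le_cfDen hα m
  have hc : 2 * (cfDen α m : ℝ) + 1 ≤ cfDen α (m + 1) := by
    exact_mod_cast two_mul_add_one_le_cfDen hα hm ha
  have hd : (cfDen α (m + 2) : ℝ) = cfDen α (m + 1) + cfDen α m := by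
    exact_mod_cast cfDen_add_two_of_cfA_eq_one ha'
  have hz := cfXi_pos hα (m + 2)
  have hzx : cfXi α (m + 2) < cfXi α (m + 1) := cfXi_succ_lt hα (m + 1)
  have hxz : cfXi α (m + 1) < 2 * cfXi α (m + 2) := cfXi_lt_two_mul_of_cfA_eq_one hα ha''
  have cases {t s : ℝ} (ht : t ≤ 2 * cfDen α (m + 2)) (hs : s ∈ psi2Set α t) :=
    mem_psi2Set_cases hα hm ha ha' ha'' ht hs
  have special {t : ℝ} := special_mem_psi2Set (t := t) hα hm ha ha' ha''
  simp only [psi2Fn_eq_sInf]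
  push_cast
  refine ⟨fun t ⟨ht₁, ht₂⟩ => ?_, fun t ⟨ht₁, ht₂⟩ => ?_, fun t ⟨ht₁, ht₂⟩ => ?_,
    fun t ⟨ht₁, ht₂⟩ => ?_, ?_⟩
  · refine le_csInf (psi2Set_nonempty hα (by linarith)) fun s hs => ?_
    rcases cases (by linarith) hs with h | h | h | h | h <;> linarith
  · refine IsLeast.csInf_eq ⟨special.1 ht₁, fun s hs => ?_⟩
    rcases cases (by linarith) hs with h | h | h | h | h <;> linarith
  · refine IsLeast.csInf_eq ⟨special.2.1 ht₁, fun s hs => ?_⟩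
    rcases cases (by linarith) hs with h | h | h | h | h <;> linarith
  · refine IsLeast.csInf_eq ⟨special.2.2.1 ht₁, fun s hs => ?_⟩
    rcases cases (by linarith) hs with h | h | h | h | h <;> linarith
  · refine IsLeast.csInf_eq ⟨special.2.2.2 le_rfl, fun s hs => ?_⟩
    rcases cases le_rfl hs with h | h | h | h | h <;> linarith

end PartialQuotientsTwoOneOne

theorem stmt14_general (α : ℝ) (hα : Irrational α)
    (n : ℕ) (hn : 3 ≤ n) (ha : 2 ≤ cfA α n)
    (ha' : cfA α (n + 1) = 1) (ha'' : cfA α (n + 2) = 1) :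
    SuccessiveIn (QSet α)
      [cfDen α n - cfDen α (n - 1), 2 * cfDen α (n - 1) + cfDen α n,
        2 * cfDen α n, 2 * cfDen α (n + 1)] := by
  obtain ⟨m, rfl⟩ : ∃ m, n = m + 1 := ⟨n - 1, by omega⟩
  rw [Nat.add_sub_cancel, show m + 1 + 1 = m + 2 from rfl]
  have hb := one_le_cfDen hα m
  have hc := two_mul_add_one_le_cfDen hα (by omega) ha
  have hd := cfDen_add_two_of_cfA_eq_one ha'
  have hz := cfXi_pos hα (m + 2)
  have hzx : cfXi α (m + 2) < cfXi α (m + 1) := cfXi_succ_lt hα (m + 1)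
  have hxz : cfXi α (m + 1) < 2 * cfXi α (m + 2) := cfXi_lt_two_mul_of_cfA_eq_one hα ha''
  obtain ⟨h₀, h₁, h₂, h₃, h₄⟩ := psi2Fn_steps hα (by omega) ha ha' ha''
  exact successiveIn_of_steps (by omega) (by omega) (by omega) (by omega) (by linarith)
    (by linarith) (by linarith) (by linarith) h₀ h₁ h₂ h₃ h₄

/-- Let `α ∈ (0,1)` be irrational, `n ≥ 3`, `aₙ ≥ 2` and
`a_{n+1} = a_{n+2} = 1`. Then `qₙ − q_{n-1}`, `2q_{n-1} + qₙ`, `2qₙ`, `2q_{n+1}`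
are four successive elements of `𝔔(α)`. -/
theorem stmt14 (α : ℝ) (hα : Irrational α) (h0 : 0 < α) (h1 : α < 1)
    (n : ℕ) (hn : 3 ≤ n) (ha : 2 ≤ cfA α n)
    (ha' : cfA α (n + 1) = 1) (ha'' : cfA α (n + 2) = 1) :
    SuccessiveIn (QSet α)
      [cfDen α n - cfDen α (n - 1), 2 * cfDen α (n - 1) + cfDen α n,
        2 * cfDen α n, 2 * cfDen α (n + 1)] :=
  stmt14_general α hα n hn ha ha' ha''
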